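/- Under the assumptions of MUB 2-design identities, the MUB-averaged correlation Q_mub(ρ^{AB}) = (1/(d_A+1)) Σ_{t,i} [I(ρ^{AB}, P_{ti} ⊗ 1_B) − I(ρ^A, P_{ti})] equals [(tr √ρ^A)² − tr((tr_A √ρ^{AB})²)]/(d_A+1). -/

import Mathlib

open Matrix Finset Kronecker ComplexOrder

/-- The positive semidefinite square root (as defined in the older Mathlib, since removed). -/
noncomputable def Matrix.PosSemidef.sqrt {𝕜 : Type*} [RCLike 𝕜] {n : Type*} [Fintype n]
    [DecidableEq n] {A : Matrix n n 𝕜} (hA : A.PosSemidef) : Matrix n n 𝕜 :=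
  (hA.1.eigenvectorUnitary : Matrix n n 𝕜) * diagonal ((↑) ∘ (√·) ∘ hA.1.eigenvalues) *
    (star (hA.1.eigenvectorUnitary : Matrix n n 𝕜))

lemma Matrix.PosSemidef.sqrt_mul_self {𝕜 : Type*} [RCLike 𝕜] {n : Type*} [Fintype n]
    [DecidableEq n] {A : Matrix n n 𝕜} (hA : A.PosSemidef) : hA.sqrt * hA.sqrt = A := by
  unfold Matrix.PosSemidef.sqrt
  have hU : star (hA.1.eigenvectorUnitary : Matrix n n 𝕜) * (hA.1.eigenvectorUnitary : Matrix n n 𝕜) = 1 :=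
    Unitary.coe_star_mul_self _
  have hdd : diagonal ((↑) ∘ (√·) ∘ hA.1.eigenvalues) * diagonal ((↑) ∘ (√·) ∘ hA.1.eigenvalues)
      = (diagonal (RCLike.ofReal ∘ hA.1.eigenvalues) : Matrix n n 𝕜) := by
    rw [diagonal_mul_diagonal]
    congr 1
    funext i
    simp only [Function.comp_apply]
    rw [← RCLike.ofReal_mul, Real.mul_self_sqrt (hA.eigenvalues_nonneg i)]
  calc _ = (hA.1.eigenvectorUnitary : Matrix n n 𝕜) * (diagonal ((↑) ∘ (√·) ∘ hA.1.eigenvalues)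
        * (star (hA.1.eigenvectorUnitary : Matrix n n 𝕜) * (hA.1.eigenvectorUnitary : Matrix n n 𝕜))
        * diagonal ((↑) ∘ (√·) ∘ hA.1.eigenvalues)) * star (hA.1.eigenvectorUnitary : Matrix n n 𝕜) := by
        simp only [Matrix.mul_assoc]
    _ = A := by
        rw [hU, Matrix.mul_one, hdd]
        conv_rhs => rw [hA.1.spectral_theorem, Unitary.conjStarAlgAut_apply]

/-- The Wigner–Yanase skew information `I(ρ, O) = -(1/2) tr([√ρ, O]²)`. -/
noncomputable def skewInfo {n : Type*} [Fintype n] [DecidableEq n]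
    (ρ : Matrix n n ℂ) (hρ : ρ.PosSemidef) (O : Matrix n n ℂ) : ℂ :=
  -(1 / 2 : ℂ) * ((hρ.sqrt * O - O * hρ.sqrt) ^ 2).trace

/-- Partial trace over the second tensor factor. -/
noncomputable def trB {dA dB : ℕ} (M : Matrix (Fin dA × Fin dB) (Fin dA × Fin dB) ℂ) :
    Matrix (Fin dA) (Fin dA) ℂ :=
  Matrix.of fun i j => ∑ u : Fin dB, M (i, u) (j, u)

/-- Partial trace over the first tensor factor. -/
noncomputable def trA {dA dB : ℕ} (M : Matrix (Fin dA × Fin dB) (Fin dA × Fin dB) ℂ) :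
    Matrix (Fin dB) (Fin dB) ℂ :=
  Matrix.of fun u v => ∑ i : Fin dA, M (i, u) (i, v)


lemma skew_eq {n : Type*} [Fintype n] [DecidableEq n]
    (ρ : Matrix n n ℂ) (hρ : ρ.PosSemidef) (O : Matrix n n ℂ) :
    skewInfo ρ hρ O = (ρ * (O * O)).trace - (hρ.sqrt * O * hρ.sqrt * O).trace := by
  unfold skewInfo
  set σ := hρ.sqrt with hσ
  have hσσ : σ * σ = ρ := hρ.sqrt_mul_self
  have e : (σ * O - O * σ) ^ 2 = σ * O * σ * O + O * σ * (O * σ) - σ * (O * O) * σ - O * (σ * σ) * O := by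
    noncomm_ring
  rw [e]
  rw [trace_sub, trace_sub, trace_add]
  have h1 : (O * σ * (O * σ)).trace = (σ * O * σ * O).trace := by
    rw [← mul_assoc, trace_mul_cycle]
    noncomm_ring
  have h2 : (σ * (O * O) * σ).trace = (ρ * (O * O)).trace := by
    rw [trace_mul_cycle, ← mul_assoc, hσσ, mul_assoc]
  have h3 : (O * (σ * σ) * O).trace = (ρ * (O * O)).trace := by
    rw [hσσ, mul_assoc, trace_mul_comm, mul_assoc]
  rw [h1, h2, h3]
  ring

lemma trB_trace {dA dB : ℕ} (M : Matrix (Fin dA × Fin dB) (Fin dA × Fin dB) ℂ) :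
    (trB M).trace = M.trace := by
  simp [trB, Matrix.trace, Matrix.diag, Fintype.sum_prod_type]

lemma trace_mul_kron_one {dA dB : ℕ} (M : Matrix (Fin dA × Fin dB) (Fin dA × Fin dB) ℂ)
    (X : Matrix (Fin dA) (Fin dA) ℂ) :
    (M * (X ⊗ₖ (1 : Matrix (Fin dB) (Fin dB) ℂ))).trace = (trB M * X).trace := by
  simp only [Matrix.trace, Matrix.diag, Matrix.mul_apply, trB, Matrix.of_apply,
    Matrix.kroneckerMap_apply, Fintype.sum_prod_type, Matrix.one_apply, Finset.sum_mul]
  trans ∑ i : Fin dA, ∑ u : Fin dB, ∑ j : Fin dA, M (i,u) (j,u) * X j i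
  · refine Finset.sum_congr rfl fun i _ => Finset.sum_congr rfl fun u _ => ?_
    refine Finset.sum_congr rfl fun j _ => ?_
    simp [mul_ite, mul_comm]
  · refine Finset.sum_congr rfl fun i _ => ?_
    exact Finset.sum_comm

lemma design_entry {dA : ℕ} (b : Fin (dA + 1) → Fin dA → Fin dA → ℂ)
    (hdesign : ∑ t : Fin (dA + 1), ∑ i : Fin dA,
        (vecMulVec (b t i) (star (b t i))) ⊗ₖ (vecMulVec (b t i) (star (b t i)))
      = (1 : Matrix (Fin dA) (Fin dA) ℂ) ⊗ₖ (1 : Matrix (Fin dA) (Fin dA) ℂ)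
        + ∑ k : Fin dA, ∑ l : Fin dA,
            (Matrix.single k l (1 : ℂ)) ⊗ₖ (Matrix.single l k (1 : ℂ)))
    (i k j l : Fin dA) :
    ∑ t : Fin (dA + 1), ∑ m : Fin dA,
        (b t m i * (starRingEnd ℂ) (b t m j)) * (b t m k * (starRingEnd ℂ) (b t m l))
      = (if i = j then 1 else 0) * (if k = l then 1 else 0)
        + (if i = l then 1 else 0) * (if j = k then 1 else 0) := by
  have h := congrFun (congrFun hdesign (i, k)) (j, l)
  simp only [Matrix.sum_apply, Matrix.add_apply, Matrix.kroneckerMap_apply,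
    Matrix.vecMulVec_apply, Pi.star_apply, RCLike.star_def, Matrix.one_apply,
    Matrix.single, Matrix.of_apply] at h
  rw [h]
  congr 1
  by_cases h1 : i = l <;> by_cases h2 : j = k <;>
    simp [h1, h2, ite_and, Finset.sum_ite_eq, Finset.sum_ite_eq', eq_comm]

lemma sumA {dA : ℕ} (b : Fin (dA + 1) → Fin dA → Fin dA → ℂ)
    (hdesign : ∑ t : Fin (dA + 1), ∑ i : Fin dA,
        (vecMulVec (b t i) (star (b t i))) ⊗ₖ (vecMulVec (b t i) (star (b t i)))
      = (1 : Matrix (Fin dA) (Fin dA) ℂ) ⊗ₖ (1 : Matrix (Fin dA) (Fin dA) ℂ)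
        + ∑ k : Fin dA, ∑ l : Fin dA,
            (Matrix.single k l (1 : ℂ)) ⊗ₖ (Matrix.single l k (1 : ℂ)))
    (τ : Matrix (Fin dA) (Fin dA) ℂ) :
    ∑ t : Fin (dA + 1), ∑ m : Fin dA,
        (τ * vecMulVec (b t m) (star (b t m)) * τ * vecMulVec (b t m) (star (b t m))).trace
      = τ.trace ^ 2 + (τ * τ).trace := by
  have h1 : ∀ t m, (τ * vecMulVec (b t m) (star (b t m)) * τ * vecMulVec (b t m) (star (b t m))).trace
      = ∑ q : Fin dA × Fin dA × Fin dA × Fin dA,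
          τ q.1 q.2.2.2 * τ q.2.2.1 q.2.1 *
            ((b t m q.2.2.2 * (starRingEnd ℂ) (b t m q.2.2.1)) *
              (b t m q.2.1 * (starRingEnd ℂ) (b t m q.1))) := by
    intro t m
    simp only [Matrix.trace, Matrix.diag, Matrix.mul_apply, Matrix.vecMulVec_apply,
      Pi.star_apply, RCLike.star_def, Fintype.sum_prod_type, Finset.sum_mul, Finset.mul_sum]
    refine Finset.sum_congr rfl fun i _ => Finset.sum_congr rfl fun x _ =>
      Finset.sum_congr rfl fun y _ => Finset.sum_congr rfl fun z _ => by ring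
  calc ∑ t, ∑ m, (τ * vecMulVec (b t m) (star (b t m)) * τ * vecMulVec (b t m) (star (b t m))).trace
      = ∑ t : Fin (dA + 1), ∑ m : Fin dA, ∑ q : Fin dA × Fin dA × Fin dA × Fin dA,
          τ q.1 q.2.2.2 * τ q.2.2.1 q.2.1 *
            ((b t m q.2.2.2 * (starRingEnd ℂ) (b t m q.2.2.1)) *
              (b t m q.2.1 * (starRingEnd ℂ) (b t m q.1))) :=
        Finset.sum_congr rfl fun t _ => Finset.sum_congr rfl fun m _ => h1 t m
    _ = ∑ q : Fin dA × Fin dA × Fin dA × Fin dA, ∑ t : Fin (dA + 1), ∑ m : Fin dA,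
          τ q.1 q.2.2.2 * τ q.2.2.1 q.2.1 *
            ((b t m q.2.2.2 * (starRingEnd ℂ) (b t m q.2.2.1)) *
              (b t m q.2.1 * (starRingEnd ℂ) (b t m q.1))) := by
        exact (Finset.sum_congr rfl fun t _ => Finset.sum_comm).trans Finset.sum_comm
    _ = ∑ q : Fin dA × Fin dA × Fin dA × Fin dA,
          τ q.1 q.2.2.2 * τ q.2.2.1 q.2.1 *
            ((if q.2.2.2 = q.2.2.1 then (1:ℂ) else 0) * (if q.2.1 = q.1 then 1 else 0)
              + (if q.2.2.2 = q.1 then 1 else 0) * (if q.2.2.1 = q.2.1 then 1 else 0)) := by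
        refine Finset.sum_congr rfl fun q _ => ?_
        simp only [← Finset.mul_sum]
        rw [design_entry b hdesign q.2.2.2 q.2.1 q.2.2.1 q.1]
    _ = τ.trace ^ 2 + (τ * τ).trace := by
        simp only [Fintype.sum_prod_type, mul_add, ite_mul, mul_ite, mul_zero, mul_one,
          zero_mul, one_mul, Finset.sum_add_distrib, Finset.sum_ite_eq, Finset.sum_ite_eq',
          Finset.mem_univ, if_true, Matrix.trace, Matrix.diag, Matrix.mul_apply, sq,
          Finset.mul_sum, Finset.sum_mul, Finset.sum_ite_irrel, Finset.sum_const_zero]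
        rw [add_comm]
        congr 1
        exact Finset.sum_congr rfl fun x _ => Finset.sum_congr rfl fun y _ => by ring

lemma sum4_perm {α β : Type*} [Fintype α] [Fintype β] (f : α → β → α → β → ℂ) :
    ∑ x : α, ∑ u : β, ∑ y : α, ∑ v : β, f x u y v
      = ∑ u : β, ∑ v : β, ∑ y : α, ∑ x : α, f x u y v :=
  calc ∑ x : α, ∑ u : β, ∑ y : α, ∑ v : β, f x u y v
      = ∑ u : β, ∑ x : α, ∑ y : α, ∑ v : β, f x u y v := Finset.sum_comm
    _ = ∑ u : β, ∑ x : α, ∑ v : β, ∑ y : α, f x u y v :=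
        Finset.sum_congr rfl fun u _ => Finset.sum_congr rfl fun x _ => Finset.sum_comm
    _ = ∑ u : β, ∑ v : β, ∑ x : α, ∑ y : α, f x u y v :=
        Finset.sum_congr rfl fun u _ => Finset.sum_comm
    _ = ∑ u : β, ∑ v : β, ∑ y : α, ∑ x : α, f x u y v :=
        Finset.sum_congr rfl fun u _ => Finset.sum_congr rfl fun v _ => Finset.sum_comm

lemma sumB {dA dB : ℕ} (b : Fin (dA + 1) → Fin dA → Fin dA → ℂ)
    (hdesign : ∑ t : Fin (dA + 1), ∑ i : Fin dA,
        (vecMulVec (b t i) (star (b t i))) ⊗ₖ (vecMulVec (b t i) (star (b t i)))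
      = (1 : Matrix (Fin dA) (Fin dA) ℂ) ⊗ₖ (1 : Matrix (Fin dA) (Fin dA) ℂ)
        + ∑ k : Fin dA, ∑ l : Fin dA,
            (Matrix.single k l (1 : ℂ)) ⊗ₖ (Matrix.single l k (1 : ℂ)))
    (σ : Matrix (Fin dA × Fin dB) (Fin dA × Fin dB) ℂ) :
    ∑ t : Fin (dA + 1), ∑ m : Fin dA,
        (σ * ((vecMulVec (b t m) (star (b t m))) ⊗ₖ (1 : Matrix (Fin dB) (Fin dB) ℂ)) * σ
          * ((vecMulVec (b t m) (star (b t m))) ⊗ₖ (1 : Matrix (Fin dB) (Fin dB) ℂ))).trace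
      = (σ * σ).trace + (trA σ * trA σ).trace := by
  classical
  have h1 : ∀ t m,
      (σ * ((vecMulVec (b t m) (star (b t m))) ⊗ₖ (1 : Matrix (Fin dB) (Fin dB) ℂ)) * σ
        * ((vecMulVec (b t m) (star (b t m))) ⊗ₖ (1 : Matrix (Fin dB) (Fin dB) ℂ))).trace
      = ∑ q : (Fin dA × Fin dB) × (Fin dA × Fin dB) × (Fin dA × Fin dB) × (Fin dA × Fin dB),
          σ q.1 q.2.2.2 * σ q.2.2.1 q.2.1
            * ((if q.2.2.2.2 = q.2.2.1.2 then (1:ℂ) else 0) * (if q.2.1.2 = q.1.2 then 1 else 0))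
            * ((b t m q.2.2.2.1 * (starRingEnd ℂ) (b t m q.2.2.1.1))
              * (b t m q.2.1.1 * (starRingEnd ℂ) (b t m q.1.1))) := by
    intro t m
    simp only [Matrix.trace, Matrix.diag, Matrix.mul_apply, Matrix.vecMulVec_apply,
      Matrix.kroneckerMap_apply, Matrix.one_apply, Pi.star_apply, RCLike.star_def,
      Fintype.sum_prod_type, Finset.sum_mul, Finset.mul_sum]
    refine Finset.sum_congr rfl fun x1 _ => Finset.sum_congr rfl fun x2 _ =>
      Finset.sum_congr rfl fun w1 _ => Finset.sum_congr rfl fun w2 _ =>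
      Finset.sum_congr rfl fun y1 _ => Finset.sum_congr rfl fun y2 _ =>
      Finset.sum_congr rfl fun z1 _ => Finset.sum_congr rfl fun z2 _ => by ring
  calc ∑ t, ∑ m, (σ * ((vecMulVec (b t m) (star (b t m))) ⊗ₖ (1 : Matrix (Fin dB) (Fin dB) ℂ)) * σ
          * ((vecMulVec (b t m) (star (b t m))) ⊗ₖ (1 : Matrix (Fin dB) (Fin dB) ℂ))).trace
      = ∑ t : Fin (dA + 1), ∑ m : Fin dA,
          ∑ q : (Fin dA × Fin dB) × (Fin dA × Fin dB) × (Fin dA × Fin dB) × (Fin dA × Fin dB),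
          σ q.1 q.2.2.2 * σ q.2.2.1 q.2.1
            * ((if q.2.2.2.2 = q.2.2.1.2 then (1:ℂ) else 0) * (if q.2.1.2 = q.1.2 then 1 else 0))
            * ((b t m q.2.2.2.1 * (starRingEnd ℂ) (b t m q.2.2.1.1))
              * (b t m q.2.1.1 * (starRingEnd ℂ) (b t m q.1.1))) :=
        Finset.sum_congr rfl fun t _ => Finset.sum_congr rfl fun m _ => h1 t m
    _ = ∑ q : (Fin dA × Fin dB) × (Fin dA × Fin dB) × (Fin dA × Fin dB) × (Fin dA × Fin dB),
          ∑ t : Fin (dA + 1), ∑ m : Fin dA,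
          σ q.1 q.2.2.2 * σ q.2.2.1 q.2.1
            * ((if q.2.2.2.2 = q.2.2.1.2 then (1:ℂ) else 0) * (if q.2.1.2 = q.1.2 then 1 else 0))
            * ((b t m q.2.2.2.1 * (starRingEnd ℂ) (b t m q.2.2.1.1))
              * (b t m q.2.1.1 * (starRingEnd ℂ) (b t m q.1.1))) :=
        (Finset.sum_congr rfl fun t _ => Finset.sum_comm).trans Finset.sum_comm
    _ = ∑ q : (Fin dA × Fin dB) × (Fin dA × Fin dB) × (Fin dA × Fin dB) × (Fin dA × Fin dB),
          σ q.1 q.2.2.2 * σ q.2.2.1 q.2.1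
            * ((if q.2.2.2.2 = q.2.2.1.2 then (1:ℂ) else 0) * (if q.2.1.2 = q.1.2 then 1 else 0))
            * ((if q.2.2.2.1 = q.2.2.1.1 then (1:ℂ) else 0) * (if q.2.1.1 = q.1.1 then 1 else 0)
              + (if q.2.2.2.1 = q.1.1 then 1 else 0) * (if q.2.2.1.1 = q.2.1.1 then 1 else 0)) := by
        refine Finset.sum_congr rfl fun q _ => ?_
        simp only [← Finset.mul_sum]
        rw [design_entry b hdesign q.2.2.2.1 q.2.1.1 q.2.2.1.1 q.1.1]
    _ = (σ * σ).trace + (trA σ * trA σ).trace := by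
        simp only [Fintype.sum_prod_type, mul_add, ite_mul, mul_ite, mul_zero, mul_one,
          zero_mul, one_mul, Finset.sum_add_distrib, Finset.sum_ite_eq, Finset.sum_ite_eq',
          Finset.mem_univ, if_true, Matrix.trace, Matrix.diag, Matrix.mul_apply, trA,
          Matrix.of_apply, Finset.mul_sum, Finset.sum_mul, Finset.sum_ite_irrel,
          Finset.sum_const_zero]
        congr 1
        exact sum4_perm (fun x u y v => σ (x, u) (x, v) * σ (y, v) (y, u))

theorem average_correlation_mub (dA dB : ℕ)
    (ρAB : Matrix (Fin dA × Fin dB) (Fin dA × Fin dB) ℂ)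
    (hρAB : ρAB.PosSemidef) (htr : ρAB.trace = 1)
    (hρA : (trB ρAB).PosSemidef)
    (b : Fin (dA + 1) → Fin dA → Fin dA → ℂ)
    (hsum : ∑ t : Fin (dA + 1), ∑ i : Fin dA, vecMulVec (b t i) (star (b t i))
      = ((dA : ℂ) + 1) • (1 : Matrix (Fin dA) (Fin dA) ℂ))
    (hdesign : ∑ t : Fin (dA + 1), ∑ i : Fin dA,
        (vecMulVec (b t i) (star (b t i))) ⊗ₖ (vecMulVec (b t i) (star (b t i)))
      = (1 : Matrix (Fin dA) (Fin dA) ℂ) ⊗ₖ (1 : Matrix (Fin dA) (Fin dA) ℂ)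
        + ∑ k : Fin dA, ∑ l : Fin dA,
            (Matrix.single k l (1 : ℂ)) ⊗ₖ (Matrix.single l k (1 : ℂ))) :
    (1 / ((dA : ℂ) + 1)) * ∑ t : Fin (dA + 1), ∑ i : Fin dA,
        (skewInfo ρAB hρAB
            ((vecMulVec (b t i) (star (b t i))) ⊗ₖ (1 : Matrix (Fin dB) (Fin dB) ℂ))
          - skewInfo (trB ρAB) hρA (vecMulVec (b t i) (star (b t i))))
      = (hρA.sqrt.trace ^ 2 - (trA hρAB.sqrt * trA hρAB.sqrt).trace) / ((dA : ℂ) + 1) := by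
  have key : ∀ (t : Fin (dA + 1)) (i : Fin dA),
      skewInfo ρAB hρAB
          ((vecMulVec (b t i) (star (b t i))) ⊗ₖ (1 : Matrix (Fin dB) (Fin dB) ℂ))
        - skewInfo (trB ρAB) hρA (vecMulVec (b t i) (star (b t i)))
      = (hρA.sqrt * vecMulVec (b t i) (star (b t i)) * hρA.sqrt
            * vecMulVec (b t i) (star (b t i))).trace
        - (hρAB.sqrt * ((vecMulVec (b t i) (star (b t i))) ⊗ₖ (1 : Matrix (Fin dB) (Fin dB) ℂ))
            * hρAB.sqrt
            * ((vecMulVec (b t i) (star (b t i))) ⊗ₖ (1 : Matrix (Fin dB) (Fin dB) ℂ))).trace := by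
    intro t i
    rw [skew_eq, skew_eq]
    rw [show ((vecMulVec (b t i) (star (b t i))) ⊗ₖ (1 : Matrix (Fin dB) (Fin dB) ℂ))
          * ((vecMulVec (b t i) (star (b t i))) ⊗ₖ (1 : Matrix (Fin dB) (Fin dB) ℂ))
        = (vecMulVec (b t i) (star (b t i)) * vecMulVec (b t i) (star (b t i)))
            ⊗ₖ (1 : Matrix (Fin dB) (Fin dB) ℂ) by
      rw [← Matrix.mul_kronecker_mul, mul_one]]
    rw [trace_mul_kron_one]
    ring
  rw [Finset.sum_congr rfl fun t _ => Finset.sum_congr rfl fun i _ => key t i]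
  rw [Finset.sum_congr rfl fun t (_ : t ∈ Finset.univ) => Finset.sum_sub_distrib _ _,
    Finset.sum_sub_distrib]
  rw [sumA b hdesign, sumB b hdesign]
  rw [hρA.sqrt_mul_self, hρAB.sqrt_mul_self, trB_trace]
  rw [one_div, inv_mul_eq_div]
  ring
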